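/- In a 2-uniform unique-sink orientation of the n-cube, every directed path has length at most 2n. -/
import Mathlib


/-- Flip coordinate `i` of a cube vertex. -/
def cflip {n : ℕ} (v : Fin n → Bool) (i : Fin n) : Fin n → Bool :=
  fun j => if j = i then !v j else v j

/-- `Φ v i = true` means the edge between `v` and `v ⊕ i` is incoming at `v` (sign `+`);
`Φ v i = false` means it is outgoing at `v` (sign `-`). Consistency says the two
endpoints of an edge agree about its direction. -/
def Consistent {n : ℕ} (Φ : (Fin n → Bool) → Fin n → Bool) : Prop :=
  ∀ v i, Φ (cflip v i) i ≠ Φ v i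

/-- `w` lies in the subcube spanned from `u` by the coordinate set `C`. -/
def InSubcube {n : ℕ} (u : Fin n → Bool) (C : Finset (Fin n)) (w : Fin n → Bool) : Prop :=
  ∀ j ∉ C, w j = u j

/-- Every (nonempty) subcube has a unique sink. -/
def HasUniqueSinks {n : ℕ} (Φ : (Fin n → Bool) → Fin n → Bool) : Prop :=
  ∀ (u : Fin n → Bool) (C : Finset (Fin n)),
    ∃! w, InSubcube u C w ∧ ∀ i ∈ C, Φ w i = true

/-- A unique-sink orientation of the `n`-cube. -/
def IsUSO {n : ℕ} (Φ : (Fin n → Bool) → Fin n → Bool) : Prop :=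
  Consistent Φ ∧ HasUniqueSinks Φ

/-- Directed edge relation of the orientation: `v → u`. -/
def Step {n : ℕ} (Φ : (Fin n → Bool) → Fin n → Bool) (v u : Fin n → Bool) : Prop :=
  ∃ i, Φ v i = false ∧ u = cflip v i

/-- `Φ` is 2-up-uniform: whenever `u` has `u i = u j = 0` (`i ≠ j`) and `u` is
the source of the 2-dimensional subcube spanned by coordinates `i, j`
(both edges at `u` outgoing), that subcube is uniformly oriented, i.e. its two
upper edges are also directed from the `0`-side to the `1`-side. -/
def TwoUpUniform {n : ℕ} (Φ : (Fin n → Bool) → Fin n → Bool) : Prop :=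
  ∀ (u : Fin n → Bool) (i j : Fin n), i ≠ j →
    u i = false → u j = false →
    Φ u i = false → Φ u j = false →
    Φ (cflip u i) j = false ∧ Φ (cflip u j) i = false

/-- The orientation obtained from `Φ` by reversing all edges. -/
def reverseAll {n : ℕ} (Φ : (Fin n → Bool) → Fin n → Bool) :
    (Fin n → Bool) → Fin n → Bool :=
  fun v i => !(Φ v i)

/-- `Φ` is 2-uniform: both `Φ` and its total reversal are 2-up-uniform. -/
def TwoUniform {n : ℕ} (Φ : (Fin n → Bool) → Fin n → Bool) : Prop :=
  TwoUpUniform Φ ∧ TwoUpUniform (reverseAll Φ)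

-- ==== auxiliary lemmas ====

lemma cflip_same {n} (v : Fin n → Bool) (i : Fin n) : cflip v i i = !v i := by
  simp [cflip]

lemma cflip_other {n} {v : Fin n → Bool} {i j : Fin n} (h : j ≠ i) : cflip v i j = v j := by
  simp [cflip, h]

lemma cflip_cflip {n} (v : Fin n → Bool) (i : Fin n) : cflip (cflip v i) i = v := by
  funext k; by_cases h : k = i <;> simp [cflip, h]

lemma cflip_comm {n} (v : Fin n → Bool) (i j : Fin n) :
    cflip (cflip v i) j = cflip (cflip v j) i := by
  by_cases hij : i = j
  · subst hij; rfl
  funext k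
  by_cases h1 : k = i <;> by_cases h2 : k = j <;>
    simp [cflip, h1, h2, hij, Ne.symm hij]

lemma consistent_flip {n} {Φ : (Fin n → Bool) → Fin n → Bool} (hc : Consistent Φ)
    (v : Fin n → Bool) (i : Fin n) : Φ (cflip v i) i = !Φ v i := by
  have := hc v i
  cases h : Φ v i <;> cases h2 : Φ (cflip v i) i <;> simp_all

lemma bool_ne {a b : Bool} (h : a ≠ b) : a = !b := by
  cases a <;> cases b <;> simp_all

lemma square_no_sink {n} {Φ : (Fin n → Bool) → Fin n → Bool}
    (hus : HasUniqueSinks Φ) {v : Fin n → Bool} {i j : Fin n} (hij : i ≠ j)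
    (h1 : Φ v j = false) (h2 : Φ (cflip v i) i = false)
    (h3 : Φ (cflip v j) i = false) (h4 : Φ (cflip (cflip v i) j) j = false) : False := by
  obtain ⟨w, ⟨hin, hsink⟩, -⟩ := hus v {i, j}
  have hji : j ≠ i := hij.symm
  have hsi : Φ w i = true := hsink i (by simp)
  have hsj : Φ w j = true := hsink j (by simp)
  by_cases hwi : w i = v i <;> by_cases hwj : w j = v j
  · have hw : w = v := by
      funext k
      by_cases hki : k = i
      · subst hki; exact hwi
      by_cases hkj : k = j
      · subst hkj; exact hwj
      exact hin k (by simp [hki, hkj])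
    rw [hw, h1] at hsj; exact Bool.noConfusion hsj
  · have hw : w = cflip v j := by
      funext k
      by_cases hkj : k = j
      · subst hkj; rw [cflip_same]; exact bool_ne hwj
      by_cases hki : k = i
      · subst hki; rw [cflip_other hij]; exact hwi
      rw [cflip_other (show k ≠ j from hkj)]; exact hin k (by simp [hki, hkj])
    rw [hw, h3] at hsi; exact Bool.noConfusion hsi
  · have hw : w = cflip v i := by
      funext k
      by_cases hki : k = i
      · subst hki; rw [cflip_same]; exact bool_ne hwi
      by_cases hkj : k = j
      · subst hkj; rw [cflip_other hji]; exact hwj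
      rw [cflip_other (show k ≠ i from hki)]; exact hin k (by simp [hki, hkj])
    rw [hw, h2] at hsi; exact Bool.noConfusion hsi
  · have hw : w = cflip (cflip v i) j := by
      funext k
      by_cases hki : k = i
      · subst hki; rw [cflip_other hij, cflip_same]; exact bool_ne hwi
      by_cases hkj : k = j
      · subst hkj; rw [cflip_same, cflip_other hji]; exact bool_ne hwj
      rw [cflip_other (show k ≠ j from hkj), cflip_other (show k ≠ i from hki)]
      exact hin k (by simp [hki, hkj])
    rw [hw, h4] at hsj; exact Bool.noConfusion hsj

lemma step_preserves {n} {Φ : (Fin n → Bool) → Fin n → Bool}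
    (huso : IsUSO Φ) (huni : TwoUniform Φ) {v : Fin n → Bool} {i j : Fin n}
    (hij : j ≠ i) (hvi : v i = true) (hΦi : Φ v i = true) (hΦj : Φ v j = false) :
    Φ (cflip v j) i = true := by
  obtain ⟨hc, hus⟩ := huso
  by_contra hcon
  have hui : Φ (cflip v j) i = false := by
    cases h : Φ (cflip v j) i
    · rfl
    · exact absurd h hcon
  have hai : Φ (cflip v i) i = false := by rw [consistent_flip hc, hΦi]; rfl
  have hdi : Φ (cflip (cflip v i) j) i = true := by
    rw [cflip_comm, consistent_flip hc, hui]; rfl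
  by_cases haj : Φ (cflip v i) j = true
  · -- cyclic square: no sink in the 2-face
    have hdj : Φ (cflip (cflip v i) j) j = false := by
      rw [consistent_flip hc, haj]; rfl
    exact square_no_sink hus hij.symm hΦj hai hui hdj
  · have haj' : Φ (cflip v i) j = false := by
      cases h : Φ (cflip v i) j
      · rfl
      · exact absurd h haj
    by_cases hvj : v j = true
    · -- sink of the 2-face is the all-zero corner; use reversed 2-up-uniformity
      have hdvi : (cflip (cflip v i) j) i = false := by
        rw [cflip_other (Ne.symm hij), cflip_same, hvi]; rfl
      have hdvj : (cflip (cflip v i) j) j = false := by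
        rw [cflip_same, cflip_other hij, hvj]; rfl
      have hΦdj : Φ (cflip (cflip v i) j) j = true := by
        rw [consistent_flip hc, haj']; rfl
      obtain ⟨-, h2⟩ := huni.2 (cflip (cflip v i) j) i j hij.symm hdvi hdvj
        (by simp [reverseAll, hdi]) (by simp [reverseAll, hΦdj])
      rw [cflip_cflip] at h2
      simp [reverseAll, hai] at h2
    · -- source of the 2-face is the all-zero corner; use 2-up-uniformity
      have hvj' : v j = false := by
        cases h : v j
        · rfl
        · exact absurd h hvj
      have hai0 : (cflip v i) i = false := by rw [cflip_same, hvi]; rfl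
      have haj0 : (cflip v i) j = false := by rw [cflip_other hij]; exact hvj'
      obtain ⟨-, h2⟩ := huni.1 (cflip v i) i j hij.symm hai0 haj0 hai haj'
      rw [hdi] at h2
      exact Bool.noConfusion h2

lemma bool_ivt (q : ℕ → Bool) : ∀ b a, a ≤ b → q a = false → q b = true →
    ∃ t, a ≤ t ∧ t < b ∧ q t = false ∧ q (t + 1) = true := by
  intro b
  induction b with
  | zero =>
    intro a ha h0 h1
    have : a = 0 := by omega
    subst this
    rw [h0] at h1; exact Bool.noConfusion h1
  | succ b ih =>
    intro a ha h0 h1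
    have haneq : a ≠ b + 1 := by
      intro h; subst h; rw [h0] at h1; exact Bool.noConfusion h1
    have ha' : a ≤ b := by omega
    by_cases hb : q b = true
    · obtain ⟨t, ht1, ht2, ht3, ht4⟩ := ih a ha' h0 hb
      exact ⟨t, ht1, by omega, ht3, ht4⟩
    · have hbq : q b = false := by
        cases h : q b
        · rfl
        · exact absurd h hb
      exact ⟨b, ha', by omega, hbq, h1⟩

/-- in a 2-uniform USO of the `n`-cube, every directed path has
length at most `2n`. -/
theorem twoUniform_short_paths {n : ℕ} (Φ : (Fin n → Bool) → Fin n → Bool)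
    (huso : IsUSO Φ) (huni : TwoUniform Φ)
    (L : ℕ) (p : ℕ → (Fin n → Bool))
    (hstep : ∀ m < L, Step Φ (p m) (p (m + 1))) :
    L ≤ 2 * n := by
  have hc : Consistent Φ := huso.1
  rcases Nat.eq_zero_or_pos n with hn | hn
  · subst hn
    by_contra h
    obtain ⟨i, -⟩ := hstep 0 (by omega)
    exact i.elim0
  classical
  set dir : ℕ → Fin n := fun m => if h : m < L then (hstep m h).choose else ⟨0, hn⟩ with hdirdef
  have hdir : ∀ m (h : m < L),
      Φ (p m) (dir m) = false ∧ p (m + 1) = cflip (p m) (dir m) := by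
    intro m h
    simp only [hdirdef, dif_pos h]
    exact (hstep m h).choose_spec
  -- invariant: once a coordinate is 1 with incoming edge, it stays so
  have inv : ∀ (i : Fin n) (m m' : ℕ), m ≤ m' → m' ≤ L →
      p m i = true → Φ (p m) i = true → p m' i = true ∧ Φ (p m') i = true := by
    intro i m m' hmm'
    induction hmm' with
    | refl => intro _ h1 h2; exact ⟨h1, h2⟩
    | @step m' h ih =>
      intro hm'L h1 h2
      have hm'lt : m' < L := by omega
      obtain ⟨q1, q2⟩ := ih (by omega) h1 h2
      have hne : dir m' ≠ i := by
        intro he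
        have := (hdir m' hm'lt).1
        rw [he, q2] at this
        exact Bool.noConfusion this
      have hstep2 := (hdir m' hm'lt).2
      constructor
      · rw [hstep2, cflip_other (Ne.symm hne)]; exact q1
      · rw [hstep2]
        exact step_preserves huso huni hne q1 q2 (hdir m' hm'lt).1
  -- an upward i-step kills all later i-steps
  have upkill : ∀ (i : Fin n) (m m' : ℕ), m < L → dir m = i → p m i = false →
      m < m' → m' < L → dir m' ≠ i := by
    intro i m m' hmL hdi hpmi hmm' hm'L hdi'
    have hp1 : p (m + 1) i = true := by
      rw [(hdir m hmL).2, hdi, cflip_same, hpmi]; rfl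
    have hΦ1 : Φ (p (m + 1)) i = true := by
      have hh := (hdir m hmL).1
      rw [hdi] at hh
      rw [(hdir m hmL).2, hdi, consistent_flip hc, hh]; rfl
    obtain ⟨-, q2⟩ := inv i (m + 1) m' (by omega) (by omega) hp1 hΦ1
    have := (hdir m' hm'L).1
    rw [hdi', q2] at this
    exact Bool.noConfusion this
  -- no three steps in the same direction
  have no3 : ∀ (i : Fin n) (m1 m2 m3 : ℕ), m1 < m2 → m2 < m3 → m3 < L →
      dir m1 = i → dir m2 = i → dir m3 = i → False := by
    intro i m1 m2 m3 h12 h23 h3L hd1 hd2 hd3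
    have h1L : m1 < L := by omega
    have h2L : m2 < L := by omega
    have hp1 : p m1 i = true := by
      cases h : p m1 i
      · exact absurd hd2 (upkill i m1 m2 h1L hd1 h h12 h2L)
      · rfl
    have hp2 : p m2 i = true := by
      cases h : p m2 i
      · exact absurd hd3 (upkill i m2 m3 h2L hd2 h h23 h3L)
      · rfl
    have hps : p (m1 + 1) i = false := by
      rw [(hdir m1 h1L).2, hd1, cflip_same, hp1]; rfl
    obtain ⟨t, hat, htb, ht0, ht1⟩ := bool_ivt (fun s => p s i) m2 (m1 + 1) (by omega) hps hp2
    have htL : t < L := by omega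
    have hdt : dir t = i := by
      by_contra hne
      rw [(hdir t htL).2, cflip_other (Ne.symm hne), ht0] at ht1
      exact Bool.noConfusion ht1
    exact absurd hd2 (upkill i t m2 htL hdt ht0 (by omega) h2L)
  have key : ∀ i : Fin n, ((Finset.range L).filter (fun m => dir m = i)).card ≤ 2 := by
    intro i
    by_contra hcard
    push_neg at hcard
    obtain ⟨a, b, c, ha, hb, hcm, hab, hac, hbc⟩ := Finset.two_lt_card_iff.mp hcard
    have H : ∀ x y z : ℕ, x < y → y < z →
        x ∈ (Finset.range L).filter (fun m => dir m = i) →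
        y ∈ (Finset.range L).filter (fun m => dir m = i) →
        z ∈ (Finset.range L).filter (fun m => dir m = i) → False := by
      intro x y z hxy hyz hx hy hz
      simp only [Finset.mem_filter, Finset.mem_range] at hx hy hz
      exact no3 i x y z hxy hyz hz.1 hx.2 hy.2 hz.2
    rcases Nat.lt_trichotomy a b with h1 | h1 | h1
    · rcases Nat.lt_trichotomy b c with h2 | h2 | h2
      · exact H a b c h1 h2 ha hb hcm
      · exact absurd h2 hbc
      · rcases Nat.lt_trichotomy a c with h3 | h3 | h3
        · exact H a c b h3 h2 ha hcm hb
        · exact absurd h3 hac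
        · exact H c a b h3 h1 hcm ha hb
    · exact absurd h1 hab
    · rcases Nat.lt_trichotomy a c with h3 | h3 | h3
      · exact H b a c h1 h3 hb ha hcm
      · exact absurd h3 hac
      · rcases Nat.lt_trichotomy b c with h2 | h2 | h2
        · exact H b c a h2 h3 hb hcm ha
        · exact absurd h2 hbc
        · exact H c b a h2 h1 hcm hb ha
  calc L = (Finset.range L).card := (Finset.card_range L).symm
    _ = ∑ i : Fin n, ((Finset.range L).filter (fun m => dir m = i)).card :=
        Finset.card_eq_sum_card_fiberwise (fun x _ => Finset.mem_univ _)
    _ ≤ ∑ _i : Fin n, 2 := Finset.sum_le_sum fun i _ => key i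
    _ = 2 * n := by simp [Finset.sum_const, Finset.card_univ, mul_comm]
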